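/- Let n ≥ 1, let p > 0, and let f ∈ ℝ^n be a nonzero vector. Let {e_{i,r} : 1 ≤ i ≤ n, r = 1,2,3} be independent rate-1 exponential random variables, and for r = 1,2,3 set H_r = max_{1≤i≤n} |f_i|^p / e_{i,r}. Let C = E[(E_1 E_2 E_3)^{−1/3}] where E_1, E_2, E_3 are independent rate-1 exponentials. Then C ∈ (0,8], E[(H_1 H_2 H_3)^{1/3}] = C · ||f||_p^p, and E[(H_1 H_2 H_3)^{2/3}] ≤ 27 · ||f||_p^{2p}. In particular, (H_1 H_2 H_3)^{1/3}/C is an unbiased estimator of ||f||_p^p with second moment at most (27/C²)·||f||_p^{2p}. -/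

import Mathlib

/-!
Max-stability of the exponential law: for independent rate-`r` exponentials `e i` and weights
`a i ≥ 0`, `P(max_i a i / e i ≤ t) = ∏_i P(e i ≥ a i / t) = exp (-r (∑ a i) / t)`, so
`max_i a i / e i` has the law of `(∑ a i) / E` for a single exponential `E`. The three maxima
`H r` are built from disjoint blocks of the `e (i, r)`, hence independent, and
`E[E ^ (-c)] = Γ(1 - c)` gives `E[(H 0 H 1 H 2) ^ c] = ‖f‖_p ^ (3pc) Γ(1 - c) ^ 3` for `c < 1`.
Take `c = 1/3` and `c = 2/3`; then `C = Γ(2/3) ^ 3`, and the bounds come from `Γ(s) ≤ 1/s` on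
`(0, 1]`, a consequence of the convexity of `Γ` on `[1, 2]`.
-/

open MeasureTheory ProbabilityTheory Real Set

lemma expMeasure_absolutelyContinuous (r : ℝ) : expMeasure r ≪ volume :=
  withDensity_absolutelyContinuous _ _

lemma ae_pos_expMeasure (r : ℝ) : ∀ᵐ x ∂expMeasure r, 0 < x := by
  have hpdf : ∀ᵐ x ∂volume, exponentialPDF r x ≠ 0 → 0 < x := by
    filter_upwards [Measure.ae_ne volume 0] with x hx hpdf
    exact hx.symm.lt_of_le (not_lt.1 fun hneg ↦ hpdf (exponentialPDF_of_neg hneg))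
  exact (ae_withDensity_iff (measurable_exponentialPDFReal r).ennreal_ofReal).2 hpdf

lemma expMeasure_Ici {r c : ℝ} (hr : 0 < r) (hc : 0 ≤ c) :
    expMeasure r (Ici c) = ENNReal.ofReal (exp (-(r * c))) := by
  have := isProbabilityMeasure_expMeasure hr
  have hexp : -(r * c) ≤ 0 := neg_nonpos.2 (mul_nonneg hr.le hc)
  rw [← measure_congr ((expMeasure_absolutelyContinuous r).ae_eq Ioi_ae_eq_Ici), ← compl_Iic,
    prob_compl_eq_one_sub measurableSet_Iic, ← ofReal_cdf, cdf_expMeasure_eq hr, if_pos hc,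
    ← ENNReal.ofReal_one, ← ENNReal.ofReal_sub _ (sub_nonneg.2 (exp_le_one_iff.2 hexp)),
    sub_sub_cancel]

lemma integral_rpow_expMeasure {r s : ℝ} (hr : 0 < r) (hs : -1 < s) :
    ∫ x, x ^ s ∂expMeasure r = Gamma (s + 1) / r ^ s := by
  have hdens : ∀ x, (exponentialPDF r x).toReal • x ^ s =
      (Ici 0).indicator (fun x ↦ r * (x ^ (s + 1 - 1) * exp (-(r * x)))) x := by
    intro x
    rcases le_or_gt 0 x with hx | hx
    · rw [indicator_of_mem (mem_Ici.2 hx), exponentialPDF_of_nonneg hx,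
        ENNReal.toReal_ofReal (by positivity), add_sub_cancel_right, smul_eq_mul]
      ring
    · rw [indicator_of_notMem (notMem_Ici.2 hx), exponentialPDF_of_neg hx, ENNReal.toReal_zero,
        zero_smul]
  change ∫ x, x ^ s ∂volume.withDensity (exponentialPDF r) = _
  rw [integral_withDensity_eq_integral_toReal_smul (f := exponentialPDF r)
    (measurable_exponentialPDFReal r).ennreal_ofReal (.of_forall fun _ ↦ ENNReal.ofReal_lt_top)]
  simp_rw [hdens]
  rw [integral_indicator measurableSet_Ici, integral_Ici_eq_integral_Ioi, integral_const_mul,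
    integral_rpow_mul_exp_neg_mul_Ioi (by linarith) hr, one_div, inv_rpow hr.le,
    rpow_add_one hr.ne']
  field_simp

lemma Real.iSup_le_iff_of_nonneg {ι : Type*} [Finite ι] {f : ι → ℝ} {t : ℝ} (ht : 0 ≤ t) :
    ⨆ i, f i ≤ t ↔ ∀ i, f i ≤ t :=
  ⟨fun h i ↦ (le_ciSup (Finite.bddAbove_range f) i).trans h, fun h ↦ Real.iSup_le h ht⟩

namespace ProbabilityTheory

lemma iIndepFun.curry {Ω ι κ 𝓧 : Type*} {mΩ : MeasurableSpace Ω} {μ : Measure Ω}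
    [MeasurableSpace 𝓧] {X : ι × κ → Ω → 𝓧} (hX : ∀ p, Measurable (X p)) (h : iIndepFun X μ) :
    iIndepFun (fun i ω j ↦ X (i, j) ω) μ := by
  have := h.isProbabilityMeasure
  have (p : ι × κ) : IsProbabilityMeasure (μ.map (X p)) :=
    Measure.isProbabilityMeasure_map (hX p).aemeasurable
  have hrow (i : ι) :
      μ.map (fun ω j ↦ X (i, j) ω) = Measure.infinitePi fun j ↦ μ.map (X (i, j)) :=
    (h.precomp (Prod.mk_right_injective i)).map_fun_eq_infinitePi_map fun j ↦ hX (i, j)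
  rw [iIndepFun_iff_map_fun_eq_infinitePi_map fun i ↦ measurable_pi_lambda _ fun j ↦ hX (i, j)]
  simp_rw [hrow]
  rw [← Measure.infinitePi_map_curry (fun i j ↦ μ.map (X (i, j))),
    ← h.map_fun_eq_infinitePi_map hX,
    Measure.map_map (MeasurableEquiv.measurable _) (measurable_pi_lambda _ hX)]
  rfl

lemma HasLaw.ae_pos_of_expMeasure {Ω : Type*} {mΩ : MeasurableSpace Ω} {μ : Measure Ω}
    {X : Ω → ℝ} {r : ℝ} (hX : HasLaw X (expMeasure r) μ) : ∀ᵐ ω ∂μ, 0 < X ω :=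
  (hX.ae_iff measurableSet_Ioi.mem).2 (ae_pos_expMeasure r)

end ProbabilityTheory

lemma integral_div_rpow_expMeasure {r S c : ℝ} (hr : 0 < r) (hS : 0 ≤ S) (hc : c < 1) :
    ∫ x, (S / x) ^ c ∂expMeasure r = S ^ c * (Gamma (1 - c) / r ^ (-c)) := by
  have h : (fun x ↦ (S / x) ^ c) =ᵐ[expMeasure r] fun x ↦ S ^ c * x ^ (-c) := by
    filter_upwards [ae_pos_expMeasure r] with x hx
    rw [div_rpow hS hx.le, rpow_neg hx.le, div_eq_mul_inv]
  rw [integral_congr_ae h, integral_const_mul, integral_rpow_expMeasure hr (by linarith),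
    neg_add_eq_sub]

section MaxStability

variable {Ω ι : Type*} {mΩ : MeasurableSpace Ω} {μ : Measure Ω} [Fintype ι] {a : ι → ℝ}
  {X : ι → Ω → ℝ} {r : ℝ}

lemma measure_iSup_div_le (ha : ∀ i, 0 ≤ a i) (hS : 0 < ∑ i, a i) (hr : 0 < r)
    (hX : ∀ i, HasLaw (X i) (expMeasure r) μ) (hind : iIndepFun X μ) (t : ℝ) :
    μ {ω | ⨆ i, a i / X i ω ≤ t} =
      if 0 < t then ENNReal.ofReal (exp (-(r * ((∑ i, a i) / t)))) else 0 := by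
  have hpos : ∀ᵐ ω ∂μ, ∀ i, 0 < X i ω := ae_all_iff.2 fun i ↦ (hX i).ae_pos_of_expMeasure
  split_ifs with ht
  · have hset : {ω | ⨆ i, a i / X i ω ≤ t} =ᵐ[μ] ⋂ i, X i ⁻¹' Ici (a i / t) := by
      filter_upwards [hpos] with ω hω
      refine eq_iff_iff.2 ?_
      change (⨆ i, a i / X i ω ≤ t) ↔ ω ∈ ⋂ i, X i ⁻¹' Ici (a i / t)
      simp only [mem_iInter, mem_preimage, mem_Ici, Real.iSup_le_iff_of_nonneg ht.le]
      exact forall_congr' fun i ↦ by rw [div_le_iff₀ (hω i), div_le_iff₀ ht, mul_comm]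
    rw [measure_congr hset, hind.meas_iInter fun i ↦ ⟨Ici _, measurableSet_Ici, rfl⟩]
    have hmarg (i : ι) :
        μ (X i ⁻¹' Ici (a i / t)) = ENNReal.ofReal (exp (-(r * (a i / t)))) := by
      rw [← Measure.map_apply_of_aemeasurable (hX i).aemeasurable measurableSet_Ici, (hX i).map_eq,
        expMeasure_Ici hr (div_nonneg (ha i) ht.le)]
    simp_rw [hmarg]
    rw [← ENNReal.ofReal_prod_of_nonneg fun i _ ↦ (exp_pos _).le, ← exp_sum, Finset.sum_div,
      Finset.mul_sum, Finset.sum_neg_distrib]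
  · obtain ⟨i, -, hi⟩ := Finset.exists_lt_of_sum_lt (by simpa using hS : ∑ i, (0:ℝ) < ∑ i, a i)
    rw [measure_eq_zero_iff_ae_notMem]
    filter_upwards [hpos] with ω hω
    exact fun hle ↦
      ht ((div_pos hi (hω i)).trans_le ((le_ciSup (Finite.bddAbove_range _) i).trans hle))

theorem hasLaw_iSup_div (ha : ∀ i, 0 ≤ a i) (hS : 0 < ∑ i, a i) (hr : 0 < r)
    (hX : ∀ i, HasLaw (X i) (expMeasure r) μ) (hind : iIndepFun X μ) :
    HasLaw (fun ω ↦ ⨆ i, a i / X i ω) ((expMeasure r).map fun x ↦ (∑ i, a i) / x) μ := by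
  have := hind.isProbabilityMeasure
  have := isProbabilityMeasure_expMeasure hr
  have hmeas : AEMeasurable (fun ω ↦ ⨆ i, a i / X i ω) μ :=
    AEMeasurable.iSup fun i ↦ aemeasurable_const.div (hX i).aemeasurable
  refine ⟨hmeas, Measure.ext_of_Iic _ _ fun t ↦ ?_⟩
  rw [Measure.map_apply_of_aemeasurable hmeas measurableSet_Iic,
    Measure.map_apply (by fun_prop : Measurable fun x : ℝ ↦ (∑ i, a i) / x) measurableSet_Iic]
  -- the law of `(∑ i, a i) / E` is the one-index case of the same computation
  have hsingle := measure_iSup_div_le (ι := Unit) (a := fun _ ↦ ∑ i, a i) (X := fun _ ↦ id)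
    (fun _ ↦ hS.le) (by simpa using hS) hr (fun _ ↦ HasLaw.id) (iIndepFun.of_subsingleton) t
  simp only [ciSup_const, Finset.univ_unique, Finset.sum_singleton, id] at hsingle
  exact (measure_iSup_div_le ha hS hr hX hind t).trans hsingle.symm

lemma ae_iSup_div_nonneg (ha : ∀ i, 0 ≤ a i) (hX : ∀ i, HasLaw (X i) (expMeasure r) μ) :
    ∀ᵐ ω ∂μ, 0 ≤ ⨆ i, a i / X i ω := by
  filter_upwards [ae_all_iff.2 fun i ↦ (hX i).ae_pos_of_expMeasure] with ω hω
  exact Real.iSup_nonneg fun i ↦ div_nonneg (ha i) (hω i).le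

lemma integral_rpow_iSup_div (ha : ∀ i, 0 ≤ a i) (hS : 0 < ∑ i, a i) (hr : 0 < r)
    (hX : ∀ i, HasLaw (X i) (expMeasure r) μ) (hind : iIndepFun X μ) {c : ℝ} (hc : c < 1) :
    ∫ ω, (⨆ i, a i / X i ω) ^ c ∂μ = (∑ i, a i) ^ c * (Gamma (1 - c) / r ^ (-c)) := by
  rw [← integral_div_rpow_expMeasure hr hS.le hc]
  calc ∫ ω, (⨆ i, a i / X i ω) ^ c ∂μ
      = ∫ y, y ^ c ∂(expMeasure r).map fun x ↦ (∑ i, a i) / x :=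
        (hasLaw_iSup_div ha hS hr hX hind).integral_comp (f := fun y ↦ y ^ c) (by fun_prop)
    _ = ∫ x, ((∑ i, a i) / x) ^ c ∂expMeasure r := integral_map (by fun_prop) (by fun_prop)

theorem integral_rpow_prod_iSup_div {κ : Type*} [Fintype κ] {e : ι × κ → Ω → ℝ}
    (ha : ∀ i, 0 ≤ a i) (hS : 0 < ∑ i, a i) (hr : 0 < r) (hmeas : ∀ q, Measurable (e q))
    (hlaw : ∀ q, HasLaw (e q) (expMeasure r) μ) (hind : iIndepFun e μ) {c : ℝ} (hc : c < 1) :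
    ∫ ω, (∏ k, ⨆ i, a i / e (i, k) ω) ^ c ∂μ =
      ((∑ i, a i) ^ c * (Gamma (1 - c) / r ^ (-c))) ^ Fintype.card κ := by
  have hX (k : κ) (i : ι) : HasLaw (e (i, k)) (expMeasure r) μ := hlaw (i, k)
  have hblocks : iIndepFun (fun k ω ↦ ⨆ i, a i / e (i, k) ω) μ :=
    ((hind.precomp Prod.swap_injective).curry fun _ ↦ hmeas _).comp
      (fun _ x ↦ ⨆ i, a i / x i) fun _ ↦ by fun_prop
  have hprod : (fun ω ↦ (∏ k, ⨆ i, a i / e (i, k) ω) ^ c) =ᵐ[μ]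
      fun ω ↦ ∏ k, (⨆ i, a i / e (i, k) ω) ^ c := by
    filter_upwards [ae_all_iff.2 fun k ↦ ae_iSup_div_nonneg ha (hX k)] with ω hω
    exact (Real.finsetProd_rpow _ _ (fun k _ ↦ hω k) c).symm
  rw [integral_congr_ae hprod, hblocks.integral_fun_prod_comp (f := fun _ y ↦ y ^ c)
    (fun k ↦ AEMeasurable.iSup fun i ↦ aemeasurable_const.div (hX k i).aemeasurable)
    (fun k ↦ by fun_prop)]
  simp_rw [integral_rpow_iSup_div ha hS hr (hX _) (hind.precomp (Prod.mk_left_injective _)) hc]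
  rw [Finset.prod_const, Finset.card_univ]

end MaxStability

lemma integral_rpow_mul_mul_expMeasure {r s : ℝ} (hr : 0 < r) (hs : -1 < s) :
    ∫ x : ℝ × ℝ × ℝ, (x.1 * x.2.1 * x.2.2) ^ s
        ∂((expMeasure r).prod ((expMeasure r).prod (expMeasure r))) =
      (Gamma (s + 1) / r ^ s) ^ 3 := by
  have := isProbabilityMeasure_expMeasure hr
  have hpos := ae_pos_expMeasure r
  have h : (fun x : ℝ × ℝ × ℝ ↦ (x.1 * x.2.1 * x.2.2) ^ s)
      =ᵐ[(expMeasure r).prod ((expMeasure r).prod (expMeasure r))]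
        fun x ↦ x.1 ^ s * (x.2.1 ^ s * x.2.2 ^ s) := by
    filter_upwards [Measure.quasiMeasurePreserving_fst.ae hpos,
      (Measure.quasiMeasurePreserving_fst.comp Measure.quasiMeasurePreserving_snd).ae hpos,
      (Measure.quasiMeasurePreserving_snd.comp Measure.quasiMeasurePreserving_snd).ae hpos]
      with x (h1 : 0 < x.1) (h2 : 0 < x.2.1) (h3 : 0 < x.2.2)
    rw [mul_rpow (by positivity) h3.le, mul_rpow h1.le h2.le, mul_assoc]
  rw [integral_congr_ae h,
    integral_prod_mul (fun x ↦ x ^ s) (fun x : ℝ × ℝ ↦ x.1 ^ s * x.2 ^ s),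
    integral_prod_mul (fun x : ℝ ↦ x ^ s) (fun x : ℝ ↦ x ^ s), integral_rpow_expMeasure hr hs]
  ring

lemma Real.Gamma_le_one_of_mem_Icc {s : ℝ} (hs : s ∈ Icc 1 2) : Gamma s ≤ 1 := by
  have h := convexOn_Gamma.2 (mem_Ioi.2 one_pos) (mem_Ioi.2 two_pos)
    (sub_nonneg.2 hs.2) (sub_nonneg.2 hs.1) (by ring)
  simp only [smul_eq_mul, Gamma_one, Gamma_two] at h
  rw [show (2 - s) * 1 + (s - 1) * 2 = s by ring] at h
  linarith

lemma Real.Gamma_le_inv_of_mem_Ioc {s : ℝ} (hs : s ∈ Ioc 0 1) : Gamma s ≤ s⁻¹ := by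
  have h := Gamma_le_one_of_mem_Icc (s := s + 1) ⟨by linarith [hs.1], by linarith [hs.2]⟩
  rw [Gamma_add_one hs.1.ne'] at h
  rw [← one_div, le_div_iff₀ hs.1]
  linarith

lemma integral_sq_rpow_div {Ω : Type*} {mΩ : MeasurableSpace Ω} {μ : Measure Ω} {Y : Ω → ℝ}
    (hY : 0 ≤ᵐ[μ] Y) (q C : ℝ) :
    ∫ ω, (Y ω ^ q / C) ^ 2 ∂μ = (∫ ω, Y ω ^ (q * 2) ∂μ) / C ^ 2 := by
  rw [← integral_div]
  refine integral_congr_ae ?_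
  filter_upwards [hY] with ω hω
  rw [div_pow, rpow_mul hω, rpow_two]

lemma sum_abs_rpow_pos {ι : Type*} [Fintype ι] {f : ι → ℝ} (hf : f ≠ 0) (p : ℝ) :
    0 < ∑ i, |f i| ^ p := by
  obtain ⟨i, hi⟩ := Function.ne_iff.1 hf
  exact Finset.sum_pos' (fun i _ ↦ by positivity)
    ⟨i, Finset.mem_univ _, rpow_pos_of_pos (abs_pos.2 hi) p⟩

theorem geometric_mean_fp_estimator_general
    {Ω : Type*} [MeasurableSpace Ω] (μ : Measure Ω)
    (n : ℕ) (p : ℝ)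
    (f : Fin n → ℝ) (hf : f ≠ 0)
    (e : Fin n × Fin 3 → Ω → ℝ) (hmeas : ∀ i, Measurable (e i))
    (hindep : iIndepFun e μ)
    (hdist : ∀ i, Measure.map (e i) μ = expMeasure 1)
    (H : Fin 3 → Ω → ℝ) (hH : ∀ r ω, H r ω = ⨆ i : Fin n, |f i| ^ p / e (i, r) ω)
    (C : ℝ)
    (hC : C = ∫ x : ℝ × ℝ × ℝ, (x.1 * x.2.1 * x.2.2) ^ (-(1 / 3) : ℝ)
        ∂((expMeasure 1).prod ((expMeasure 1).prod (expMeasure 1)))) :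
    (0 < C ∧ C ≤ 8) ∧
      (∫ ω, (H 0 ω * H 1 ω * H 2 ω) ^ ((1 : ℝ) / 3) ∂μ = C * ∑ i, |f i| ^ p) ∧
      (∫ ω, (H 0 ω * H 1 ω * H 2 ω) ^ ((2 : ℝ) / 3) ∂μ ≤ 27 * (∑ i, |f i| ^ p) ^ 2) ∧
      (∫ ω, (H 0 ω * H 1 ω * H 2 ω) ^ ((1 : ℝ) / 3) / C ∂μ = ∑ i, |f i| ^ p) ∧
      (∫ ω, ((H 0 ω * H 1 ω * H 2 ω) ^ ((1 : ℝ) / 3) / C) ^ 2 ∂μ ≤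
        27 / C ^ 2 * (∑ i, |f i| ^ p) ^ 2) := by
  set S := ∑ i, |f i| ^ p
  have ha (i : Fin n) : 0 ≤ |f i| ^ p := by positivity
  have hS : 0 < S := sum_abs_rpow_pos hf p
  have hlaw (q : Fin n × Fin 3) : HasLaw (e q) (expMeasure 1) μ :=
    ⟨(hmeas q).aemeasurable, hdist q⟩
  have hmoment {c : ℝ} (hc : c < 1) :
      ∫ ω, (H 0 ω * H 1 ω * H 2 ω) ^ c ∂μ = S ^ (c * 3) * Gamma (1 - c) ^ 3 := by
    rw [rpow_mul hS.le, rpow_ofNat, ← mul_pow]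
    simpa [hH, Fin.prod_univ_three] using
      integral_rpow_prod_iSup_div ha hS one_pos hmeas hlaw hindep hc
  have hY : 0 ≤ᵐ[μ] fun ω ↦ H 0 ω * H 1 ω * H 2 ω := by
    filter_upwards [ae_all_iff.2 fun k ↦ ae_iSup_div_nonneg ha fun i ↦ hlaw (i, k)] with ω hω
    simp only [hH, Pi.zero_apply]
    exact mul_nonneg (mul_nonneg (hω 0) (hω 1)) (hω 2)
  have hCval : C = Gamma (2 / 3) ^ 3 := by
    rw [hC, integral_rpow_mul_mul_expMeasure one_pos (by norm_num)]
    norm_num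
  have hCpos : 0 < C := hCval ▸ by positivity
  have hΓ {s : ℝ} (hs : s ∈ Ioc 0 1) : Gamma s ^ 3 ≤ s⁻¹ ^ 3 :=
    pow_le_pow_left₀ (Gamma_pos_of_pos hs.1).le (Gamma_le_inv_of_mem_Ioc hs) 3
  have hmean : ∫ ω, (H 0 ω * H 1 ω * H 2 ω) ^ ((1 : ℝ) / 3) ∂μ = C * S := by
    rw [hmoment (by norm_num), hCval]
    norm_num [mul_comm]
  have hsecond : ∫ ω, (H 0 ω * H 1 ω * H 2 ω) ^ ((2 : ℝ) / 3) ∂μ ≤ 27 * S ^ 2 := by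
    have := hΓ (s := 1 / 3) ⟨by norm_num, by norm_num⟩
    rw [hmoment (by norm_num)]
    norm_num at this ⊢
    nlinarith [sq_nonneg S]
  refine ⟨⟨hCpos, ?_⟩, hmean, hsecond, by rw [integral_div, hmean]; field_simp, ?_⟩
  · have := hΓ (s := 2 / 3) ⟨by norm_num, by norm_num⟩
    norm_num at this
    linarith
  · rw [integral_sq_rpow_div hY, div_le_iff₀ (by positivity)]
    calc _ ≤ 27 * S ^ 2 := by norm_num [hsecond]
      _ = 27 / C ^ 2 * S ^ 2 * C ^ 2 := by field_simp

/-- **unbiased `F_p` estimator via geometric means.** Let `n ≥ 1`, `p > 0`,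
and let `f ∈ ℝⁿ` be nonzero.  Let `{e (i, r)}` (for `i < n`, `r < 3`) be independent
rate-1 exponentials, and for each `r` set `H r = max_i |f i| ^ p / e (i, r)`.  Let
`C = E[(E₁ E₂ E₃) ^ (-1/3)]` for independent rate-1 exponentials `E₁, E₂, E₃` (expressed
as an integral against the triple product of `expMeasure 1`).  Then `C ∈ (0, 8]`,
`E[(H₀ H₁ H₂) ^ (1/3)] = C · ‖f‖_p ^ p`, and `E[(H₀ H₁ H₂) ^ (2/3)] ≤ 27 · ‖f‖_p ^ (2p)`;
in particular `(H₀ H₁ H₂) ^ (1/3) / C` is an unbiased estimator of `‖f‖_p ^ p` with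
second moment at most `(27 / C²) · ‖f‖_p ^ (2p)`. -/
theorem geometric_mean_fp_estimator
    {Ω : Type*} [MeasurableSpace Ω] (μ : Measure Ω) [IsProbabilityMeasure μ]
    (n : ℕ) (hn : 1 ≤ n) (p : ℝ) (hp : 0 < p)
    (f : Fin n → ℝ) (hf : f ≠ 0)
    (e : Fin n × Fin 3 → Ω → ℝ) (hmeas : ∀ i, Measurable (e i))
    (hindep : iIndepFun e μ)
    (hdist : ∀ i, Measure.map (e i) μ = expMeasure 1)
    (H : Fin 3 → Ω → ℝ) (hH : ∀ r ω, H r ω = ⨆ i : Fin n, |f i| ^ p / e (i, r) ω)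
    (C : ℝ)
    (hC : C = ∫ x : ℝ × ℝ × ℝ, (x.1 * x.2.1 * x.2.2) ^ (-(1 / 3) : ℝ)
        ∂((expMeasure 1).prod ((expMeasure 1).prod (expMeasure 1)))) :
    (0 < C ∧ C ≤ 8) ∧
      (∫ ω, (H 0 ω * H 1 ω * H 2 ω) ^ ((1 : ℝ) / 3) ∂μ = C * ∑ i, |f i| ^ p) ∧
      (∫ ω, (H 0 ω * H 1 ω * H 2 ω) ^ ((2 : ℝ) / 3) ∂μ ≤ 27 * (∑ i, |f i| ^ p) ^ 2) ∧
      (∫ ω, (H 0 ω * H 1 ω * H 2 ω) ^ ((1 : ℝ) / 3) / C ∂μ = ∑ i, |f i| ^ p) ∧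
      (∫ ω, ((H 0 ω * H 1 ω * H 2 ω) ^ ((1 : ℝ) / 3) / C) ^ 2 ∂μ ≤
        27 / C ^ 2 * (∑ i, |f i| ^ p) ^ 2) :=
  geometric_mean_fp_estimator_general μ n p f hf e hmeas hindep hdist H hH C hC
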